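/- The logics EQ_1 and EQ_2 have the uniform interpolation property; for every n ≥ 3, the logic EQ_n does not have the Craig interpolation property; and for every n ≥ 1, the logic LO_n has the uniform interpolation property. -/

import Mathlib

inductive MForm (α : Type) : Type
  | top : MForm α
  | atom : α → MForm α
  | neg : MForm α → MForm α
  | and : MForm α → MForm α → MForm α
  | box : MForm α → MForm α
deriving DecidableEq

namespace MForm

def imp {α : Type} (φ ψ : MForm α) : MForm α := neg (and φ (neg ψ))

def dia {α : Type} (φ : MForm α) : MForm α := neg (box (neg φ))

def sig {α : Type} [DecidableEq α] : MForm α → Finset α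
  | top => ∅
  | atom p => {p}
  | neg φ => sig φ
  | and φ ψ => sig φ ∪ sig ψ
  | box φ => sig φ

def IsProp {α : Type} : MForm α → Prop
  | top => True
  | atom _ => True
  | neg φ => IsProp φ
  | and φ ψ => IsProp φ ∧ IsProp ψ
  | box _ => False

def subf {α : Type} [DecidableEq α] : MForm α → Finset (MForm α)
  | top => {top}
  | atom p => {atom p}
  | neg φ => insert (neg φ) (subf φ)
  | and φ ψ => insert (and φ ψ) (subf φ ∪ subf ψ)
  | box φ => insert (box φ) (subf φ)

/-- The dag-size of a formula: the number of its distinct subformulas. -/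
def dagSize {α : Type} [DecidableEq α] (φ : MForm α) : ℕ := (subf φ).card

end MForm

def psat {α : Type} (v : α → Prop) : MForm α → Prop
  | .top => True
  | .atom p => v p
  | .neg φ => ¬ psat v φ
  | .and φ ψ => psat v φ ∧ psat v ψ
  | .box _ => True

/-- Propositional tautology. -/
def PTaut {α : Type} (φ : MForm α) : Prop := ∀ v : α → Prop, psat v φ

def bigAnd {α : Type} : List (MForm α) → MForm α
  | [] => .top
  | φ :: l => .and φ (bigAnd l)

def bigOr {α : Type} (l : List (MForm α)) : MForm α := .neg (bigAnd (l.map .neg))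

def boxIter {α : Type} : ℕ → MForm α → MForm α
  | 0, φ => φ
  | n + 1, φ => .box (boxIter n φ)

def diaIter {α : Type} : ℕ → MForm α → MForm α
  | 0, φ => φ
  | n + 1, φ => MForm.dia (diaIter n φ)

/-- `□^{≤n} φ`. -/
def ble {α : Type} (n : ℕ) (φ : MForm α) : MForm α :=
  bigAnd ((List.range (n + 1)).map (fun k => boxIter k φ))

/-- `◇^{≤n} φ`. -/
def dle {α : Type} (n : ℕ) (φ : MForm α) : MForm α := .neg (ble n (.neg φ))

def substAtoms {α β : Type} (s : α → MForm β) : MForm α → MForm β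
  | .top => .top
  | .atom a => s a
  | .neg φ => .neg (substAtoms s φ)
  | .and φ ψ => .and (substAtoms s φ) (substAtoms s ψ)
  | .box φ => .box (substAtoms s φ)

structure Frame where
  W : Type
  ne : Nonempty W
  R : W → W → Prop

structure PFrame extends Frame where
  pt : W

def sat (F : Frame) (V : F.W → ℕ → Prop) : F.W → MForm ℕ → Prop
  | w, .top => True
  | w, .atom p => V w p
  | w, .neg φ => ¬ sat F V w φ
  | w, .and φ ψ => sat F V w φ ∧ sat F V w ψ
  | w, .box φ => ∀ v, F.R w v → sat F V v φ

def validAt (F : Frame) (w : F.W) (φ : MForm ℕ) : Prop := ∀ V, sat F V w φ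

def Log (𝓕 : Set PFrame) : Set (MForm ℕ) := {φ | ∀ P ∈ 𝓕, validAt P.toFrame P.pt φ}

def Rooted (F : Frame) (w : F.W) : Prop := ∀ v, Relation.ReflTransGen F.R w v

def StrImp (L : Set (MForm ℕ)) (σ : Finset ℕ) (φ χ : MForm ℕ) : Prop :=
  χ.sig ⊆ σ ∧ φ.imp χ ∈ L ∧
    ∀ ψ : MForm ℕ, ψ.sig ⊆ σ → φ.imp ψ ∈ L → χ.imp ψ ∈ L

def UnifInt (L : Set (MForm ℕ)) (σ : Finset ℕ) (φ χ : MForm ℕ) : Prop :=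
  χ.sig ⊆ σ ∧ φ.imp χ ∈ L ∧
    ∀ ψ : MForm ℕ, ψ.sig ∩ φ.sig ⊆ σ → φ.imp ψ ∈ L → χ.imp ψ ∈ L

def CraigInt (L : Set (MForm ℕ)) (φ ψ χ : MForm ℕ) : Prop :=
  φ.imp χ ∈ L ∧ χ.imp ψ ∈ L ∧ χ.sig ⊆ φ.sig ∩ ψ.sig

def HasCIP (L : Set (MForm ℕ)) : Prop :=
  ∀ φ ψ : MForm ℕ, φ.imp ψ ∈ L → ∃ χ, CraigInt L φ ψ χ

def IsBisim (σ : Finset ℕ) (F₁ : Frame) (V₁ : F₁.W → ℕ → Prop)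
    (F₂ : Frame) (V₂ : F₂.W → ℕ → Prop) (Z : F₁.W → F₂.W → Prop) : Prop :=
  (∀ w₁ w₂, Z w₁ w₂ → ∀ p ∈ σ, (V₁ w₁ p ↔ V₂ w₂ p)) ∧
  (∀ w₁ w₂ v₁, Z w₁ w₂ → F₁.R w₁ v₁ → ∃ v₂, F₂.R w₂ v₂ ∧ Z v₁ v₂) ∧
  (∀ w₁ w₂ v₂, Z w₁ w₂ → F₂.R w₂ v₂ → ∃ v₁, F₁.R w₁ v₁ ∧ Z v₁ v₂)

def Bisim (σ : Finset ℕ) (F₁ : Frame) (V₁ : F₁.W → ℕ → Prop) (w₁ : F₁.W)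
    (F₂ : Frame) (V₂ : F₂.W → ℕ → Prop) (w₂ : F₂.W) : Prop :=
  ∃ Z, IsBisim σ F₁ V₁ F₂ V₂ Z ∧ Z w₁ w₂

def IsEME (σ : Finset ℕ) (Φ : Finset (MForm ℕ)) : Prop :=
  (∀ φ ∈ Φ, φ.IsProp ∧ φ.sig ⊆ σ) ∧
  (∀ v : ℕ → Prop, ∃ φ ∈ Φ, psat v φ) ∧
  (∀ φ ∈ Φ, ∀ ψ ∈ Φ, φ ≠ ψ → ∀ v : ℕ → Prop, ¬ (psat v φ ∧ psat v ψ))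

def IsCover (σ : Finset ℕ) (Φ : Finset (MForm ℕ)) (F : Frame) (V : F.W → ℕ → Prop) : Prop :=
  ∀ φ ∈ Φ, ∀ w₁ w₂, sat F V w₁ φ → sat F V w₂ φ →
    ∀ χ : MForm ℕ, χ.IsProp → χ.sig ⊆ σ → (sat F V w₁ χ ↔ sat F V w₂ χ)

noncomputable def coverFml (σ : Finset ℕ) (Φ : Finset (MForm ℕ)) (N : ℕ) : MForm ℕ :=
  bigAnd (Φ.toList.map (fun φ => bigAnd (σ.toList.map (fun p =>
    MForm.imp (dle N (.and φ (.atom p))) (ble N (MForm.imp φ (.atom p)))))))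

/-- EQ_n: the logic of all pointed frames whose relation is an equivalence relation and
which have at most `n` worlds. -/
def EQlog (n : ℕ) : Set (MForm ℕ) :=
  {φ | ∀ F : Frame, Equivalence F.R → Finite F.W → Nat.card F.W ≤ n →
    ∀ w : F.W, validAt F w φ}

/-- LO_n: the logic of all rooted pointed frames that are finite strict linear orders with
at most `n` worlds, pointed at the minimum (from which all worlds are reachable). -/
def LOlog (n : ℕ) : Set (MForm ℕ) :=
  {φ | ∀ F : Frame, Irreflexive F.R → Transitive F.R →
    (∀ a b : F.W, a ≠ b → F.R a b ∨ F.R b a) →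
    Finite F.W → Nat.card F.W ≤ n →
    ∀ w : F.W, (∀ v : F.W, v ≠ w → F.R w v) → validAt F w φ}

/-- The uniform interpolation property. -/
def HasUIP (L : Set (MForm ℕ)) : Prop :=
  ∀ φ : MForm ℕ, ∀ σ ⊆ φ.sig, ∃ χ, UnifInt L σ φ χ

/-!
Each of the logics is the logic of finitely many finite pointed frames (a cluster of `m + 1`
worlds for `EQ_{m+1}`, the chains with at most `n` worlds for `LO_n`). For `EQ_1`, `EQ_2` and
`LO_n`, a single `σ`-formula describes a model on such a frame up to isomorphism over `σ`, and
only finitely many such descriptions exist. Two models with the same description amalgamate on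
one frame, so the disjunction of the descriptions consistent with `φ` is a uniform interpolant.
For `n ≥ 3`, `EQ_n` proves that `n - 1` pairwise distinct `q`-worlds leave room for at most one
`¬q`-world; but a `q`-formula cannot count, since it does not separate the two `q`-bisimilar
models on the `n`-cluster that realize both `q` and `¬q`.
-/

section Semantics

variable {F : Frame} {V : F.W → ℕ → Prop} {w : F.W}

lemma sat_imp {φ ψ : MForm ℕ} : sat F V w (φ.imp ψ) ↔ (sat F V w φ → sat F V w ψ) := by
  simp only [MForm.imp, sat]
  tauto

lemma sat_dia {φ : MForm ℕ} : sat F V w φ.dia ↔ ∃ v, F.R w v ∧ sat F V v φ := by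
  simp [MForm.dia, sat]

lemma sat_bigAnd {l : List (MForm ℕ)} : sat F V w (bigAnd l) ↔ ∀ φ ∈ l, sat F V w φ := by
  induction l with
  | nil => simp [bigAnd, sat]
  | cons φ l ih => simp [bigAnd, sat, ih]

lemma sat_bigOr {l : List (MForm ℕ)} : sat F V w (bigOr l) ↔ ∃ φ ∈ l, sat F V w φ := by
  simp [bigOr, sat, sat_bigAnd]

end Semantics

lemma mem_sig_bigAnd {l : List (MForm ℕ)} {p : ℕ} : p ∈ (bigAnd l).sig ↔ ∃ φ ∈ l, p ∈ φ.sig := by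
  induction l with
  | nil => simp [bigAnd, MForm.sig]
  | cons φ l ih => simp [bigAnd, MForm.sig, ih]

lemma sig_bigAnd_subset {s : Finset ℕ} {l : List (MForm ℕ)} (h : ∀ φ ∈ l, φ.sig ⊆ s) :
    (bigAnd l).sig ⊆ s := fun _ hp =>
  let ⟨φ, hφ, hpφ⟩ := mem_sig_bigAnd.mp hp
  h φ hφ hpφ

lemma sig_bigOr_subset {s : Finset ℕ} {l : List (MForm ℕ)} (h : ∀ φ ∈ l, φ.sig ⊆ s) :
    (bigOr l).sig ⊆ s :=
  sig_bigAnd_subset (by simpa [MForm.sig] using h)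

lemma sat_iff_of_isBisim {τ : Finset ℕ} {F₁ F₂ : Frame} {V₁ : F₁.W → ℕ → Prop}
    {V₂ : F₂.W → ℕ → Prop} {Z : F₁.W → F₂.W → Prop} (hZ : IsBisim τ F₁ V₁ F₂ V₂ Z)
    {θ : MForm ℕ} (hθ : θ.sig ⊆ τ) {w₁ : F₁.W} {w₂ : F₂.W} (hw : Z w₁ w₂) :
    sat F₁ V₁ w₁ θ ↔ sat F₂ V₂ w₂ θ := by
  obtain ⟨hatom, hforth, hback⟩ := hZ
  induction θ generalizing w₁ w₂ with
  | top => exact Iff.rfl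
  | atom p => exact hatom w₁ w₂ hw p (hθ (Finset.mem_singleton_self p))
  | neg φ ih => exact not_congr (ih hθ hw)
  | and φ ψ ihφ ihψ =>
    rw [MForm.sig, Finset.union_subset_iff] at hθ
    exact and_congr (ihφ hθ.1 hw) (ihψ hθ.2 hw)
  | box φ ih =>
    constructor
    · intro h v₂ hv₂
      obtain ⟨v₁, hv₁, hZv⟩ := hback w₁ w₂ v₂ hw hv₂
      exact (ih hθ hZv).mp (h v₁ hv₁)
    · intro h v₁ hv₁
      obtain ⟨v₂, hv₂, hZv⟩ := hforth w₁ w₂ v₁ hw hv₁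
      exact (ih hθ hZv).mpr (h v₂ hv₂)

lemma imp_mem_Log {𝓕 : Set PFrame} {φ ψ : MForm ℕ} :
    φ.imp ψ ∈ Log 𝓕 ↔
      ∀ P ∈ 𝓕, ∀ V, sat P.toFrame V P.pt φ → sat P.toFrame V P.pt ψ := by
  simp only [Log, validAt, Set.mem_ofPred_eq, sat_imp]

def IsSigmaIso (σ : Finset ℕ) (P Q : PFrame) (V : P.W → ℕ → Prop) (U : Q.W → ℕ → Prop)
    (e : P.W ≃ Q.W) : Prop :=
  e P.pt = Q.pt ∧ (∀ x y, P.R x y ↔ Q.R (e x) (e y)) ∧ ∀ x, ∀ p ∈ σ, (V x p ↔ U (e x) p)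

namespace IsSigmaIso

variable {σ : Finset ℕ} {P Q : PFrame} {V : P.W → ℕ → Prop} {U : Q.W → ℕ → Prop}
  {e : P.W ≃ Q.W}

lemma sat_iff (he : IsSigmaIso σ P Q V U e) {θ : MForm ℕ} (hθ : θ.sig ⊆ σ) :
    sat P.toFrame V P.pt θ ↔ sat Q.toFrame U Q.pt θ := by
  obtain ⟨hpt, hR, hσ⟩ := he
  refine sat_iff_of_isBisim (Z := fun x y => e x = y) ⟨?_, ?_, ?_⟩ hθ hpt
  · rintro x _ rfl p hp
    exact hσ x p hp
  · rintro x _ x' rfl hxx'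
    exact ⟨e x', (hR x x').mp hxx', rfl⟩
  · rintro x _ y' rfl hxy'
    exact ⟨e.symm y', (hR x _).mpr (by simpa using hxy'), e.apply_symm_apply y'⟩

/-- The amalgam copies `U` on the atoms of `S` and keeps `V` elsewhere. -/
lemma exists_amalgam (he : IsSigmaIso σ P Q V U e) (S : Finset ℕ) :
    ∃ V' : P.W → ℕ → Prop,
      (∀ θ : MForm ℕ, θ.sig ⊆ S → (sat P.toFrame V' P.pt θ ↔ sat Q.toFrame U Q.pt θ)) ∧
      ∀ θ : MForm ℕ, θ.sig ∩ S ⊆ σ → (sat P.toFrame V' P.pt θ ↔ sat P.toFrame V P.pt θ) := by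
  classical
  obtain ⟨hpt, hR, hσ⟩ := he
  refine ⟨fun x p => if p ∈ S then U (e x) p else V x p, fun θ hθ => ?_, fun θ hθ => ?_⟩
  · exact sat_iff ⟨hpt, hR, fun x p hp => by simp [hp]⟩ hθ
  · refine sat_iff_of_isBisim (Z := Eq) ⟨?_, ?_, ?_⟩ (subset_refl θ.sig) rfl
    · rintro x _ rfl p hp
      by_cases hpS : p ∈ S
      · simpa [hpS] using (hσ x p (hθ (Finset.mem_inter.mpr ⟨hp, hpS⟩))).symm
      · simp [hpS]
    · rintro x _ x' rfl hxx'
      exact ⟨x', hxx', rfl⟩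
    · rintro x _ x' rfl hxx'
      exact ⟨x', hxx', rfl⟩

end IsSigmaIso

def Characterizes (𝓕 : Set PFrame) (σ : Finset ℕ) (Δ : Finset (MForm ℕ)) : Prop :=
  (∀ δ ∈ Δ, δ.sig ⊆ σ) ∧
  (∀ P ∈ 𝓕, ∀ V, ∃ δ ∈ Δ, sat P.toFrame V P.pt δ) ∧
  ∀ δ ∈ Δ, ∀ P ∈ 𝓕, ∀ Q ∈ 𝓕, ∀ V U, sat P.toFrame V P.pt δ → sat Q.toFrame U Q.pt δ →
    ∃ e, IsSigmaIso σ P Q V U e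

theorem hasUIP_Log_of_characterizes {𝓕 : Set PFrame}
    (h : ∀ σ : Finset ℕ, ∃ Δ, Characterizes 𝓕 σ Δ) : HasUIP (Log 𝓕) := by
  classical
  intro φ σ _
  obtain ⟨Δ, hsig, hcover, hiso⟩ := h σ
  let consistent : MForm ℕ → Prop := fun δ =>
    ∃ Q ∈ 𝓕, ∃ U, sat Q.toFrame U Q.pt δ ∧ sat Q.toFrame U Q.pt φ
  refine ⟨bigOr (Δ.filter consistent).toList, ?_, ?_, ?_⟩
  · refine sig_bigOr_subset fun δ hδ => hsig δ ?_
    simp only [Finset.mem_toList, Finset.mem_filter] at hδ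
    exact hδ.1
  · refine imp_mem_Log.mpr fun P hP V hφ => ?_
    obtain ⟨δ, hδ, hPδ⟩ := hcover P hP V
    exact sat_bigOr.mpr ⟨δ, by simpa using ⟨hδ, P, hP, V, hPδ, hφ⟩, hPδ⟩
  · intro ψ hψ hφψ
    refine imp_mem_Log.mpr fun P hP V hχ => ?_
    obtain ⟨δ, hδ, hPδ⟩ := sat_bigOr.mp hχ
    simp only [Finset.mem_toList, Finset.mem_filter] at hδ
    obtain ⟨hδΔ, Q, hQ, U, hQδ, hQφ⟩ := hδ
    obtain ⟨e, he⟩ := hiso δ hδΔ P hP Q hQ V U hPδ hQδ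
    obtain ⟨V', hV'φ, hV'ψ⟩ := he.exists_amalgam φ.sig
    have hφ' : sat P.toFrame V' P.pt φ := (hV'φ φ subset_rfl).mpr hQφ
    exact (hV'ψ ψ hψ).mp (imp_mem_Log.mp hφψ P hP V' hφ')

noncomputable def litF (σ A : Finset ℕ) : MForm ℕ :=
  bigAnd (σ.toList.map fun p => if p ∈ A then .atom p else .neg (.atom p))

lemma sig_litF (σ A : Finset ℕ) : (litF σ A).sig ⊆ σ := by
  refine sig_bigAnd_subset fun φ hφ => ?_
  simp only [List.mem_map, Finset.mem_toList] at hφ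
  obtain ⟨p, hp, rfl⟩ := hφ
  split_ifs <;> simpa [MForm.sig] using hp

lemma sat_litF {F : Frame} {V : F.W → ℕ → Prop} {w : F.W} {σ A : Finset ℕ} :
    sat F V w (litF σ A) ↔ ∀ p ∈ σ, (V w p ↔ p ∈ A) := by
  simp only [litF, sat_bigAnd, List.mem_map, Finset.mem_toList]
  refine ⟨fun h p hp => ?_, ?_⟩
  · have := h _ ⟨p, hp, rfl⟩
    by_cases hpA : p ∈ A <;> simp_all [sat]
  · rintro h _ ⟨p, hp, rfl⟩
    by_cases hpA : p ∈ A <;> simp_all [sat]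

lemma sat_litF_filter {F : Frame} {V : F.W → ℕ → Prop} {w : F.W}
    {σ : Finset ℕ} [DecidablePred (V w)] : sat F V w (litF σ {p ∈ σ | V w p}) :=
  sat_litF.mpr fun p hp => by simp [hp]

section Cluster

abbrev clusterFrame (m : ℕ) : Frame := ⟨Fin (m + 1), ⟨0⟩, fun _ _ => True⟩

abbrev clusterPF (m : ℕ) : PFrame := ⟨clusterFrame m, (0 : Fin (m + 1))⟩

lemma exists_surjective_fin_apply_zero {α : Type} [Finite α] {m : ℕ} (h : Nat.card α ≤ m + 1)
    (a : α) : ∃ f : Fin (m + 1) → α, f.Surjective ∧ f 0 = a := by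
  have : Nonempty α := ⟨a⟩
  let emb : α ↪ Fin (m + 1) := (Finite.equivFin α).toEmbedding.trans (Fin.castLEEmb h)
  have hsurj := Function.invFun_surjective emb.injective
  obtain ⟨i, hi⟩ := hsurj a
  exact ⟨Function.invFun emb ∘ Equiv.swap 0 i, hsurj.comp (Equiv.swap 0 i).surjective,
    by simpa using hi⟩

/-- The cluster of the point is a surjective bounded-morphic image of the full cluster. -/
theorem EQlog_succ_eq_Log (m : ℕ) : EQlog (m + 1) = Log {clusterPF m} := by
  ext θ
  constructor
  · rintro hθ _ rfl
    exact hθ _ ⟨fun _ => trivial, fun _ => trivial, fun _ _ => trivial⟩ inferInstance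
      (by simp) _
  · intro hθ F hE hfin hcard w V
    obtain ⟨f, hf, hf0⟩ := exists_surjective_fin_apply_zero (α := {v // F.R w v})
      ((Nat.card_le_card_of_injective _ Subtype.val_injective).trans hcard) ⟨w, hE.refl w⟩
    have hZ : IsBisim θ.sig (clusterFrame m) (fun i => V (f i)) F V (fun i u => (f i).1 = u) := by
      refine ⟨?_, ?_, ?_⟩
      · rintro i _ rfl p _
        exact Iff.rfl
      · rintro i _ j rfl -
        exact ⟨f j, hE.trans (hE.symm (f i).2) (f j).2, rfl⟩
      · rintro i _ v rfl hv
        obtain ⟨j, hj⟩ := hf ⟨v, hE.trans (f i).2 hv⟩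
        exact ⟨j, trivial, congrArg Subtype.val hj⟩
    exact (sat_iff_of_isBisim hZ subset_rfl (by rw [hf0])).mp (hθ _ rfl _)

noncomputable def deltaF (σ A B : Finset ℕ) : MForm ℕ :=
  (litF σ A).and ((litF σ B).dia.and (bigOr [litF σ A, litF σ B]).box)

lemma sig_deltaF (σ A B : Finset ℕ) : (deltaF σ A B).sig ⊆ σ := by
  have hB : (litF σ B).dia.sig ⊆ σ := sig_litF σ B
  have hAB : (bigOr [litF σ A, litF σ B]).box.sig ⊆ σ :=
    sig_bigOr_subset (by simp [sig_litF])
  simp only [deltaF, MForm.sig, Finset.union_subset_iff] at hB hAB ⊢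
  exact ⟨sig_litF σ A, hB, hAB⟩

lemma sat_litF_of_sat_deltaF {m : ℕ} (hm : m ≤ 1) {V : Fin (m + 1) → ℕ → Prop}
    {σ A B : Finset ℕ} (h : sat (clusterFrame m) V 0 (deltaF σ A B)) (x : Fin (m + 1)) :
    sat (clusterFrame m) V x (litF σ (if x = 0 then A else B)) := by
  simp only [deltaF, sat, sat_dia, sat_bigOr, List.mem_cons, List.not_mem_nil, or_false,
    exists_eq_or_imp, exists_eq_left, true_and] at h
  obtain ⟨hA, ⟨y, hyB⟩, hall⟩ := h
  split_ifs with hx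
  · exact hx ▸ hA
  have hxy : y ≠ 0 → y = x := fun hy => Fin.ext (by omega)
  rcases hall x trivial with hxA | hxB
  · by_cases hy : y = 0
    · subst hy
      rw [sat_litF] at hA hyB hxA ⊢
      exact fun p hp => (hxA p hp).trans ((hA p hp).symm.trans (hyB p hp))
    · exact hxy hy ▸ hyB
  · exact hxB

theorem characterizes_clusterPF {m : ℕ} (hm : m ≤ 1) (σ : Finset ℕ) :
    Characterizes {clusterPF m} σ
      ((σ.powerset ×ˢ σ.powerset).image fun AB => deltaF σ AB.1 AB.2) := by
  classical
  refine ⟨?_, ?_, ?_⟩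
  · simp only [Finset.mem_image]
    rintro _ ⟨AB, -, rfl⟩
    exact sig_deltaF σ _ _
  · rintro _ rfl V
    refine ⟨deltaF σ {p ∈ σ | V 0 p} {p ∈ σ | V (Fin.last m) p},
      Finset.mem_image.mpr ⟨(_, _), Finset.mem_product.mpr
        ⟨Finset.mem_powerset.mpr (Finset.filter_subset _ _),
          Finset.mem_powerset.mpr (Finset.filter_subset _ _)⟩, rfl⟩, ?_⟩
    have hall : ∀ x : Fin (m + 1), x = 0 ∨ x = Fin.last m := fun x => by
      rw [Fin.ext_iff, Fin.ext_iff, Fin.val_zero, Fin.val_last]; omega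
    simp only [deltaF, sat, sat_dia, sat_bigOr, List.mem_cons, List.not_mem_nil, or_false,
      exists_eq_or_imp, exists_eq_left, true_and]
    refine ⟨sat_litF_filter, ⟨_, sat_litF_filter⟩, fun x _ => ?_⟩
    rcases hall x with rfl | rfl
    exacts [Or.inl sat_litF_filter, Or.inr sat_litF_filter]
  · simp only [Finset.mem_image]
    rintro _ ⟨AB, -, rfl⟩ _ rfl _ rfl V U hV hU
    refine ⟨Equiv.refl _, rfl, fun _ _ => Iff.rfl, fun x p hp => ?_⟩
    have hVx := sat_litF.mp (sat_litF_of_sat_deltaF hm hV x) p hp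
    have hUx := sat_litF.mp (sat_litF_of_sat_deltaF hm hU x) p hp
    exact hVx.trans hUx.symm

theorem hasUIP_EQlog_succ {m : ℕ} (hm : m ≤ 1) : HasUIP (EQlog (m + 1)) := by
  rw [EQlog_succ_eq_Log]
  exact hasUIP_Log_of_characterizes fun σ => ⟨_, characterizes_clusterPF hm σ⟩

end Cluster

section Chain

abbrev chainFrame (m : ℕ) : Frame := ⟨Fin (m + 1), ⟨0⟩, (· < ·)⟩

abbrev chainPF (m : ℕ) : PFrame := ⟨chainFrame m, (0 : Fin (m + 1))⟩

lemma exists_equiv_chain {F : Frame} [IsStrictTotalOrder F.W F.R] [Finite F.W] {w : F.W}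
    (hroot : ∀ v, v ≠ w → F.R w v) :
    ∃ m, Nat.card F.W = m + 1 ∧ ∃ e : Fin (m + 1) ≃ F.W,
      e 0 = w ∧ ∀ i j, i < j ↔ F.R (e i) (e j) := by
  classical
  have : Fintype F.W := Fintype.ofFinite _
  let _ : LinearOrder F.W := linearOrderOfSTO F.R
  obtain ⟨m, hm⟩ : ∃ m, Fintype.card F.W = m + 1 :=
    Nat.exists_eq_add_one.mpr (Fintype.card_pos_iff.mpr ⟨w⟩)
  let e : Fin (m + 1) ≃o F.W := monoEquivOfFin F.W hm
  refine ⟨m, by rw [Nat.card_eq_fintype_card, hm], e.toEquiv, ?_, fun i j => e.lt_iff_lt.symm⟩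
  by_contra h
  exact (Fin.zero_le (e.symm w)).not_gt (by simpa using e.symm.strictMono (hroot _ h))

theorem LOlog_eq_Log (n : ℕ) : LOlog n = Log (chainPF '' Set.Iio n) := by
  ext θ
  constructor
  · rintro hθ _ ⟨m, hm, rfl⟩
    exact hθ (chainFrame m) (fun a => lt_irrefl a) (fun _ _ _ => lt_trans)
      (fun _ _ => lt_or_gt_of_ne) inferInstance (by simpa using hm) _
      (fun v hv => (Fin.pos_iff_ne_zero' v).mpr hv)
  · intro hθ F hirr htrans htot _ hcard w hroot V
    have : IsStrictTotalOrder F.W F.R :=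
      { trichotomous := fun a b hab hba => by_contra fun h => (htot a b h).elim hab hba
        irrefl := hirr
        trans := htrans }
    obtain ⟨m, hm, e, he0, he⟩ := exists_equiv_chain hroot
    have hiso : IsSigmaIso θ.sig (chainPF m) ⟨F, w⟩ (fun i => V (e i)) V e :=
      ⟨he0, he, fun _ _ _ => Iff.rfl⟩
    exact hiso.sat_iff subset_rfl |>.mp (hθ _ ⟨m, by simp; omega, rfl⟩ _)

lemma sat_diaIter_top_chain {m j : ℕ} {V : Fin (m + 1) → ℕ → Prop} {x : Fin (m + 1)} :
    sat (chainFrame m) V x (diaIter j .top) ↔ x.val + j ≤ m := by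
  induction j generalizing x with
  | zero => simpa [diaIter, sat] using Fin.is_le x
  | succ j ih =>
    simp only [diaIter, sat_dia, ih]
    constructor
    · rintro ⟨y, hxy, hy⟩
      have := Fin.lt_def.mp hxy
      omega
    · intro h
      exact ⟨⟨x.val + 1, by omega⟩, Fin.lt_def.mpr (by simp), by simp; omega⟩

def depthF (j : ℕ) : MForm ℕ := (diaIter j .top).and (diaIter (j + 1) .top).neg

lemma sig_diaIter (k : ℕ) (φ : MForm ℕ) : (diaIter k φ).sig = φ.sig := by
  induction k with
  | zero => rfl
  | succ k ih => simpa [diaIter, MForm.dia, MForm.sig] using ih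

lemma sig_depthF (j : ℕ) : (depthF j).sig = ∅ := by
  simp [depthF, MForm.sig, sig_diaIter]

lemma sat_depthF_chain {m j : ℕ} {V : Fin (m + 1) → ℕ → Prop} {x : Fin (m + 1)} :
    sat (chainFrame m) V x (depthF j) ↔ x.val + j = m := by
  simp only [depthF, sat, sat_diaIter_top_chain]
  omega

def boxRefl (θ : MForm ℕ) : MForm ℕ := θ.and θ.box

lemma sat_boxRefl_chain_zero {m : ℕ} {V : Fin (m + 1) → ℕ → Prop} {θ : MForm ℕ} :
    sat (chainFrame m) V 0 (boxRefl θ) ↔ ∀ x, sat (chainFrame m) V x θ := by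
  refine ⟨fun ⟨h0, h⟩ x => ?_, fun h => ⟨h 0, fun x _ => h x⟩⟩
  by_cases hx : x = 0
  · exact hx ▸ h0
  · exact h x ((Fin.pos_iff_ne_zero' x).mpr hx)

noncomputable def chainChar (σ : Finset ℕ) (k : ℕ) (L : Fin (k + 1) → Finset ℕ) : MForm ℕ :=
  (depthF k).and (bigAnd (List.ofFn fun i => boxRefl ((depthF (k - i)).imp (litF σ (L i)))))

lemma sig_chainChar (σ : Finset ℕ) (k : ℕ) (L : Fin (k + 1) → Finset ℕ) :
    (chainChar σ k L).sig ⊆ σ := by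
  refine Finset.union_subset (by simp [sig_depthF]) (sig_bigAnd_subset fun φ hφ => ?_)
  obtain ⟨i, rfl⟩ := List.mem_ofFn.mp hφ
  simpa [boxRefl, MForm.imp, MForm.sig, sig_depthF] using sig_litF σ (L i)

lemma eq_of_sat_chainChar {m k : ℕ} {V : Fin (m + 1) → ℕ → Prop} {σ : Finset ℕ}
    {L : Fin (k + 1) → Finset ℕ} (h : sat (chainFrame m) V 0 (chainChar σ k L)) : m = k := by
  simpa [eq_comm] using sat_depthF_chain.mp h.1

lemma sat_chainChar {m : ℕ} {V : Fin (m + 1) → ℕ → Prop} {σ : Finset ℕ}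
    {L : Fin (m + 1) → Finset ℕ} :
    sat (chainFrame m) V 0 (chainChar σ m L) ↔ ∀ x, sat (chainFrame m) V x (litF σ (L x)) := by
  have hdepth : ∀ x i : Fin (m + 1), x.val + (m - i.val) = m ↔ x = i := fun x i => by
    rw [Fin.ext_iff]; omega
  simp only [chainChar, sat, sat_bigAnd, List.forall_mem_ofFn_iff, sat_boxRefl_chain_zero,
    sat_imp, sat_depthF_chain, hdepth, Fin.val_zero, zero_add, true_and]
  exact ⟨fun h x => h x x rfl, fun h i x hx => hx ▸ h x⟩

theorem characterizes_chainPF (n : ℕ) (σ : Finset ℕ) :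
    Characterizes (chainPF '' Set.Iio n) σ ((Finset.range n).biUnion fun m =>
      Finset.univ.image fun L : Fin (m + 1) → σ.powerset => chainChar σ m fun i => L i) := by
  classical
  refine ⟨?_, ?_, ?_⟩
  · simp only [Finset.mem_biUnion, Finset.mem_image]
    rintro _ ⟨m, -, L, -, rfl⟩
    exact sig_chainChar σ m _
  · rintro _ ⟨m, hm, rfl⟩ V
    refine ⟨chainChar σ m fun i => {p ∈ σ | V i p}, ?_, sat_chainChar.mpr fun x => sat_litF_filter⟩
    simp only [Finset.mem_biUnion, Finset.mem_image]
    exact ⟨m, Finset.mem_range.mpr hm,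
      fun i => ⟨_, Finset.mem_powerset.mpr (Finset.filter_subset _ _)⟩, Finset.mem_univ _, rfl⟩
  · simp only [Finset.mem_biUnion, Finset.mem_image]
    rintro _ ⟨k, -, L, -, rfl⟩ _ ⟨m, -, rfl⟩ _ ⟨m', -, rfl⟩ V U hV hU
    obtain rfl := eq_of_sat_chainChar hV
    obtain rfl := eq_of_sat_chainChar hU
    refine ⟨Equiv.refl _, rfl, fun _ _ => Iff.rfl, fun x p hp => ?_⟩
    have hVx := sat_litF.mp (sat_chainChar.mp hV x) p hp
    have hUx := sat_litF.mp (sat_chainChar.mp hU x) p hp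
    exact hVx.trans hUx.symm

theorem hasUIP_LOlog (n : ℕ) : HasUIP (LOlog n) := by
  rw [LOlog_eq_Log]
  exact hasUIP_Log_of_characterizes fun σ => ⟨_, characterizes_chainPF n σ⟩

end Chain

section NoCraig

/-- Atom `0` plays `q` and atom `i + 2` plays `pᵢ`; the `k` successors are pairwise distinct
`q`-worlds. -/
def manyQ (k : ℕ) : MForm ℕ :=
  bigAnd (List.ofFn fun i : Fin k => MForm.dia (.and (.atom 0) (.and (.atom (i.val + 2))
    (bigAnd (List.ofFn fun j : Fin i.val => .neg (.atom (j.val + 2)))))))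

/-- Atom `1` separates two `¬q`-successors. -/
def twoNotQ : MForm ℕ :=
  ((MForm.atom 0).neg.and (.atom 1)).dia.and ((MForm.atom 0).neg.and (MForm.atom 1).neg).dia

lemma one_notMem_sig_manyQ (k : ℕ) : 1 ∉ (manyQ k).sig := by
  simp [manyQ, mem_sig_bigAnd, List.mem_ofFn, MForm.dia, MForm.sig]

lemma sig_twoNotQ : twoNotQ.sig ⊆ {0, 1} := by
  simp [twoNotQ, MForm.dia, MForm.sig]

/-- The `k` worlds from `manyQ k` and the two from `twoNotQ` are `k + 2` distinct worlds. -/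
lemma not_sat_twoNotQ_of_sat_manyQ {F : Frame} [Finite F.W] {k : ℕ}
    (hcard : Nat.card F.W ≤ k + 1) {V : F.W → ℕ → Prop} {w : F.W}
    (hφ : sat F V w (manyQ k)) : ¬ sat F V w twoNotQ := by
  simp only [manyQ, sat_bigAnd, List.forall_mem_ofFn_iff, sat_dia, sat] at hφ
  simp only [twoNotQ, sat_dia, sat]
  rintro ⟨⟨a, -, ha0, ha1⟩, ⟨b, -, hb0, hb1⟩⟩
  choose x _ hx0 hxi hxj using hφ
  have hx : Function.Injective x := by
    intro i j hij
    by_contra hne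
    rcases lt_or_gt_of_ne hne with h | h
    · exact hxj j ⟨i, h⟩ (hij ▸ hxi i)
    · exact hxj i ⟨j, h⟩ (hij ▸ hxi j)
  have hab : Function.Injective fun t : Bool => cond t a b := by
    have hne : a ≠ b := fun h => hb1 (h ▸ ha1)
    rintro (_ | _) (_ | _) h
    exacts [rfl, (hne h.symm).elim, (hne h).elim, rfl]
  have hinj := hx.sumElim hab fun i t h => by
    cases t
    exacts [hb0 ((show x i = b from h) ▸ hx0 i), ha0 ((show x i = a from h) ▸ hx0 i)]
  have := Nat.card_le_card_of_injective _ hinj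
  simp only [Nat.card_eq_fintype_card, Fintype.card_sum, Fintype.card_fin, Fintype.card_bool]
    at this
  omega

lemma manyQ_imp_mem_EQlog (k : ℕ) : (manyQ k).imp twoNotQ.neg ∈ EQlog (k + 1) :=
  fun _ _ _ hcard _ _ => sat_imp.mpr (not_sat_twoNotQ_of_sat_manyQ hcard)

def manyQVal (k : ℕ) (x : Fin (k + 1)) (p : ℕ) : Prop := x ≠ 0 ∧ (p = 0 ∨ p = x.val + 1)

def twoNotQVal (k : ℕ) (x : Fin (k + 1)) (p : ℕ) : Prop :=
  (p = 0 ∧ 2 ≤ x.val) ∨ (p = 1 ∧ x.val = 0)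

lemma sat_manyQ_manyQVal (k : ℕ) : sat (clusterFrame k) (manyQVal k) 0 (manyQ k) := by
  simp only [manyQ, sat_bigAnd, List.forall_mem_ofFn_iff, sat_dia, sat]
  intro i
  refine ⟨i.succ, trivial, ⟨Fin.succ_ne_zero i, Or.inl rfl⟩, ⟨Fin.succ_ne_zero i, by simp⟩,
    fun j ⟨_, hj⟩ => ?_⟩
  rw [Fin.val_succ] at hj
  omega

lemma sat_twoNotQ_twoNotQVal {k : ℕ} (hk : 2 ≤ k) :
    sat (clusterFrame k) (twoNotQVal k) 0 twoNotQ := by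
  simp only [twoNotQ, sat_dia, sat]
  exact ⟨⟨0, trivial, by simp [twoNotQVal]⟩, ⟨⟨1, by omega⟩, trivial, by simp [twoNotQVal]⟩⟩

lemma isBisim_manyQVal_twoNotQVal {k : ℕ} (hk : 2 ≤ k) :
    IsBisim {0} (clusterFrame k) (manyQVal k) (clusterFrame k) (twoNotQVal k)
      fun x y => manyQVal k x 0 ↔ twoNotQVal k y 0 := by
  refine ⟨fun x y hxy p hp => by rwa [Finset.mem_singleton.mp hp], ?_, ?_⟩
  · intro _ _ x _ _
    by_cases hx : x = 0
    · exact ⟨0, trivial, by simp [manyQVal, twoNotQVal, hx]⟩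
    · exact ⟨⟨2, by omega⟩, trivial, by simp [manyQVal, twoNotQVal, hx]⟩
  · intro _ _ y _ _
    by_cases hy : 2 ≤ y.val
    · refine ⟨⟨1, by omega⟩, trivial, ?_⟩
      simp only [manyQVal, twoNotQVal, ne_eq, Fin.ext_iff, Fin.val_zero]
      simp [hy]
    · exact ⟨0, trivial, by simp [manyQVal, twoNotQVal, hy]⟩

theorem not_hasCIP_EQlog {k : ℕ} (hk : 2 ≤ k) : ¬ HasCIP (EQlog (k + 1)) := by
  intro hCIP
  obtain ⟨χ, hφχ, hχψ, hsig⟩ := hCIP _ _ (manyQ_imp_mem_EQlog k)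
  have hχ : χ.sig ⊆ {0} := fun p hp => by
    have hpφ := (Finset.mem_inter.mp (hsig hp)).1
    have hpψ : p = 0 ∨ p = 1 := by simpa using sig_twoNotQ (Finset.mem_inter.mp (hsig hp)).2
    rcases hpψ with rfl | rfl
    exacts [Finset.mem_singleton_self 0, absurd hpφ (one_notMem_sig_manyQ k)]
  rw [EQlog_succ_eq_Log] at hφχ hχψ
  have h₁ := imp_mem_Log.mp hφχ _ rfl _ (sat_manyQ_manyQVal k)
  have h₂ := (sat_iff_of_isBisim (isBisim_manyQVal_twoNotQVal hk) hχ
    (show manyQVal k 0 0 ↔ twoNotQVal k 0 0 by simp [manyQVal, twoNotQVal])).mp h₁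
  exact imp_mem_Log.mp hχψ _ rfl _ h₂ (sat_twoNotQ_twoNotQVal hk)

end NoCraig

/-- EQ₁ and EQ₂ have UIP, EQ_n for `n ≥ 3` lacks CIP, and LO_n for `n ≥ 1`
has UIP. -/
theorem stmt18 :
    HasUIP (EQlog 1) ∧ HasUIP (EQlog 2) ∧
    (∀ n : ℕ, 3 ≤ n → ¬ HasCIP (EQlog n)) ∧
    (∀ n : ℕ, 1 ≤ n → HasUIP (LOlog n)) := by
  refine ⟨hasUIP_EQlog_succ (m := 0) zero_le_one, hasUIP_EQlog_succ le_rfl,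
    fun n hn => ?_, fun n _ => hasUIP_LOlog n⟩
  obtain ⟨k, rfl⟩ := Nat.exists_eq_add_of_le' hn
  exact not_hasCIP_EQlog (by omega)
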